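/- arXiv:2503.02352 — 6 statements merged into one kernel-verified Lean document; each statement's English description precedes it below -/
import Mathlib

section
/- Minimizing C(S,S̄) − α·C(S,S) − β·C(S̄,S̄) over nonempty proper subsets S ⊂ V is equivalent to minimizing C(S,S̄) − λ·Σ_{i∈S} d_i over the same sets, where λ = (α−β)/(1+α+β); i.e., the two objective functions differ by a positive scalar multiple (1+α+β)/(1+2β) composed with addition of a constant independent of S, so they have the same minimizers. -/
open Finset

variable {V : Type*}

def cutC (w : V → V → ℝ) (A B : Finset V) : ℝ :=
  ∑ i ∈ A, ∑ j ∈ B, w i j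

def deg [Fintype V] (w : V → V → ℝ) (i : V) : ℝ := ∑ j, w i j

lemma cutC_symm [Fintype V] (w : V → V → ℝ) (hsym : ∀ i j, w i j = w j i)
    (A B : Finset V) : cutC w A B = cutC w B A := by
  unfold cutC
  rw [Finset.sum_comm]
  exact Finset.sum_congr rfl fun i _ => Finset.sum_congr rfl fun j _ => hsym j i

lemma vol_eq [Fintype V] [DecidableEq V] (w : V → V → ℝ) (S : Finset V) :
    ∑ i ∈ S, deg w i = cutC w S S + cutC w S Sᶜ := by
  unfold cutC deg
  rw [← Finset.sum_add_distrib]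
  exact Finset.sum_congr rfl fun i _ => (Finset.sum_add_sum_compl S _).symm

lemma total_eq [Fintype V] [DecidableEq V] (w : V → V → ℝ)
    (hsym : ∀ i j, w i j = w j i) (S : Finset V) :
    cutC w (univ : Finset V) univ
      = cutC w S S + 2 * cutC w S Sᶜ + cutC w Sᶜ Sᶜ := by
  have h1 : cutC w (univ : Finset V) univ = cutC w S univ + cutC w Sᶜ univ := by
    unfold cutC; exact (Finset.sum_add_sum_compl S _).symm
  have h2 : cutC w S univ = cutC w S S + cutC w S Sᶜ := by
    unfold cutC
    rw [← Finset.sum_add_distrib]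
    exact Finset.sum_congr rfl fun i _ => (Finset.sum_add_sum_compl S _).symm
  have h3 : cutC w Sᶜ univ = cutC w Sᶜ S + cutC w Sᶜ Sᶜ := by
    unfold cutC
    rw [← Finset.sum_add_distrib]
    exact Finset.sum_congr rfl fun i _ => (Finset.sum_add_sum_compl S _).symm
  rw [h1, h2, h3, cutC_symm w hsym Sᶜ S]
  ring

theorem stmt_2 [Fintype V] [DecidableEq V] (w : V → V → ℝ)
    (hsym : ∀ i j, w i j = w j i) (hnn : ∀ i j, 0 ≤ w i j)
    (α β : ℝ) (hα : 0 ≤ α) (hβ : 0 ≤ β) :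
    ∃ K : ℝ,
      (∀ S : Finset V,
          cutC w S Sᶜ - α * cutC w S S - β * cutC w Sᶜ Sᶜ
            = (1 + α + β) *
                (cutC w S Sᶜ - ((α - β) / (1 + α + β)) * ∑ i ∈ S, deg w i) + K) ∧
      (∀ S₀ : Finset V, S₀.Nonempty → S₀ ≠ Finset.univ →
        ((∀ S : Finset V, S.Nonempty → S ≠ Finset.univ →
            cutC w S₀ S₀ᶜ - α * cutC w S₀ S₀ - β * cutC w S₀ᶜ S₀ᶜ
              ≤ cutC w S Sᶜ - α * cutC w S S - β * cutC w Sᶜ Sᶜ) ↔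
         (∀ S : Finset V, S.Nonempty → S ≠ Finset.univ →
            cutC w S₀ S₀ᶜ - ((α - β) / (1 + α + β)) * ∑ i ∈ S₀, deg w i
              ≤ cutC w S Sᶜ - ((α - β) / (1 + α + β)) * ∑ i ∈ S, deg w i))) := by
  have hpos : (0:ℝ) < 1 + α + β := by linarith
  have hne : (1 + α + β) ≠ 0 := ne_of_gt hpos
  refine ⟨-β * cutC w (univ : Finset V) univ, ?_, ?_⟩
  · intro S
    have hT := total_eq w hsym S
    have hV := vol_eq w S
    rw [hV]
    have hcc : cutC w Sᶜ Sᶜ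
        = cutC w (univ : Finset V) univ - cutC w S S - 2 * cutC w S Sᶜ := by
      linarith
    rw [hcc]
    field_simp
    ring
  · intro S₀ _ _
    have key : ∀ S : Finset V,
        cutC w S Sᶜ - α * cutC w S S - β * cutC w Sᶜ Sᶜ
          = (1 + α + β) *
              (cutC w S Sᶜ - ((α - β) / (1 + α + β)) * ∑ i ∈ S, deg w i)
            + (-β * cutC w (univ : Finset V) univ) := by
      intro S
      have hT := total_eq w hsym S
      have hV := vol_eq w S
      rw [hV]
      have hcc : cutC w Sᶜ Sᶜ
          = cutC w (univ : Finset V) univ - cutC w S S - 2 * cutC w S Sᶜ := by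
        linarith
      rw [hcc]
      field_simp
      ring
    constructor
    · intro h S hS1 hS2
      have := h S hS1 hS2
      rw [key S₀, key S] at this
      have := sub_nonneg.mpr this
      nlinarith [this]
    · intro h S hS1 hS2
      have := h S hS1 hS2
      rw [key S₀, key S]
      nlinarith [this]
end

section
/- In the directed (s,t)-graph G'_{st}(λ) with λ < 0, where each i ∈ L⁺ has arc (s,i) of infinite capacity, each j ∈ L⁻ has arc (j,t) of infinite capacity, and each i ∈ U has arcs (s,i) of capacity 0 and (i,t) of capacity |λ|·d_i, the capacity of any finite (s,t)-cut (S,S̄) (necessarily satisfying L⁺ ⊆ S, L⁻ ⊆ S̄) equals C(S,S̄) − λ·Σ_{i∈S} d_i + λ·Σ_{i∈L⁺} d_i. Consequently a minimum (s,t)-cut of G'_{st}(λ) minimizes C(S,S̄) − λ·Σ_{i∈S} d_i over L⁺ ⊆ S ⊆ V∖L⁻. -/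
open Finset

variable {V : Type*}

theorem stmt_5 [Fintype V] [DecidableEq V] (w : V → V → ℝ)
    (hsym : ∀ i j, w i j = w j i) (hnn : ∀ i j, 0 ≤ w i j)
    (Lp Lm : Finset V) (hdisj : Disjoint Lp Lm) (lam : ℝ) (hlam : lam < 0) :
    (∀ S : Finset V, Lp ⊆ S → Disjoint S Lm →
        cutC w S Sᶜ + ∑ i ∈ S ∩ (Lp ∪ Lm)ᶜ, |lam| * deg w i
          = cutC w S Sᶜ - lam * ∑ i ∈ S, deg w i
            + lam * ∑ i ∈ Lp, deg w i) ∧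
    (∀ Sstar : Finset V, Lp ⊆ Sstar → Disjoint Sstar Lm →
      (∀ S, Lp ⊆ S → Disjoint S Lm →
          cutC w Sstar Sstarᶜ + ∑ i ∈ Sstar ∩ (Lp ∪ Lm)ᶜ, |lam| * deg w i
            ≤ cutC w S Sᶜ + ∑ i ∈ S ∩ (Lp ∪ Lm)ᶜ, |lam| * deg w i) →
      (∀ S, Lp ⊆ S → Disjoint S Lm →
          cutC w Sstar Sstarᶜ - lam * ∑ i ∈ Sstar, deg w i
            ≤ cutC w S Sᶜ - lam * ∑ i ∈ S, deg w i)) := by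
  have key : ∀ S : Finset V, Lp ⊆ S → Disjoint S Lm →
      cutC w S Sᶜ + ∑ i ∈ S ∩ (Lp ∪ Lm)ᶜ, |lam| * deg w i
        = cutC w S Sᶜ - lam * ∑ i ∈ S, deg w i + lam * ∑ i ∈ Lp, deg w i := by
    intro S hLp hLm
    have hset : S ∩ (Lp ∪ Lm)ᶜ = S \ Lp := by
      ext x
      simp only [mem_inter, mem_compl, mem_union, mem_sdiff]
      constructor
      · rintro ⟨hx, h⟩; exact ⟨hx, fun hxp => h (Or.inl hxp)⟩
      · rintro ⟨hx, h⟩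
        refine ⟨hx, fun hc => ?_⟩
        rcases hc with hc | hc
        · exact h hc
        · exact (Finset.disjoint_left.mp hLm hx) hc
    have habs : |lam| = -lam := abs_of_neg hlam
    rw [hset, habs]
    have hsum : ∑ i ∈ S \ Lp, deg w i = ∑ i ∈ S, deg w i - ∑ i ∈ Lp, deg w i :=
      Finset.sum_sdiff_eq_sub hLp
    rw [← Finset.mul_sum, hsum]
    ring
  refine ⟨key, ?_⟩
  intro Sstar hLp' hLm' hmin S hLpS hLmS
  have h1 := key Sstar hLp' hLm'
  have h2 := key S hLpS hLmS
  have h3 := hmin S hLpS hLmS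
  linarith
end

section
/- In the Confidence HNC graph G^c_{st}(λ), where each labeled node i ∈ L⁺ has arc (s,i) of capacity γ_i, each i ∈ L⁻ has arc (i,t) of capacity γ_i, each unlabeled i ∈ U has arcs (s,i) of capacity max(λd_i, 0) and (i,t) of capacity max(−λd_i, 0), and each edge [i,j] contributes arcs of capacity w_{ij} in both directions, the cut capacity of any (s,t)-cut (S,S̄) equals C(S,S̄) − λ·Σ_{j∈U∩S} d_j + Σ_{i∈L⁺∩S̄} γ_i + Σ_{k∈L⁻∩S} γ_k plus a constant independent of S. Hence a minimum (s,t)-cut minimizes C(S,S̄) − λ·Σ_{j∈U∩S} d_j + Σ_{i∈L⁺∩S̄} γ_i + Σ_{k∈L⁻∩S} γ_k over all S ⊆ V. -/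
open Finset

variable {V : Type*}

lemma key_6 [Fintype V] [DecidableEq V] (w : V → V → ℝ) (lam : ℝ)
    (U : Finset V) (S : Finset V) :
    ∑ j ∈ Sᶜ ∩ U, max (lam * deg w j) 0
      + ∑ j ∈ S ∩ U, max (-(lam * deg w j)) 0
    = - lam * ∑ j ∈ U ∩ S, deg w j + ∑ j ∈ U, max (lam * deg w j) 0 := by
  have h1 : Sᶜ ∩ U = U \ S := by
    ext x; simp [Finset.mem_compl, Finset.mem_sdiff, and_comm]
  have h2 : S ∩ U = U ∩ S := Finset.inter_comm _ _
  have h3 : ∀ j, max (-(lam * deg w j)) 0 = max (lam * deg w j) 0 - lam * deg w j := by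
    intro j
    rcases le_total (lam * deg w j) 0 with h | h
    · rw [max_eq_left (by linarith), max_eq_right h]; ring
    · rw [max_eq_right (by linarith), max_eq_left h]; ring
  rw [h1, h2]
  simp only [h3, Finset.sum_sub_distrib]
  have h4 := Finset.sum_inter_add_sum_sdiff U S (fun j => max (lam * deg w j) 0)
  have h5 : ∑ i ∈ U ∩ S, -lam * deg w i = - ∑ x ∈ U ∩ S, lam * deg w x := by
    simp [neg_mul]
  rw [Finset.mul_sum]
  linarith

theorem stmt_6 [Fintype V] [DecidableEq V] (w : V → V → ℝ)
    (hsym : ∀ i j, w i j = w j i) (hnn : ∀ i j, 0 ≤ w i j)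
    (Lp Lm : Finset V) (hdisj : Disjoint Lp Lm)
    (γ : V → ℝ) (hγ : ∀ i, 0 ≤ γ i) (lam : ℝ) :
    ∃ K : ℝ,
      (∀ S : Finset V,
          cutC w S Sᶜ
            + ∑ j ∈ Sᶜ ∩ (Lp ∪ Lm)ᶜ, max (lam * deg w j) 0
            + ∑ j ∈ S ∩ (Lp ∪ Lm)ᶜ, max (-(lam * deg w j)) 0
            + ∑ i ∈ Lp ∩ Sᶜ, γ i + ∑ k ∈ Lm ∩ S, γ k
          = (cutC w S Sᶜ - lam * ∑ j ∈ (Lp ∪ Lm)ᶜ ∩ S, deg w j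
              + ∑ i ∈ Lp ∩ Sᶜ, γ i + ∑ k ∈ Lm ∩ S, γ k) + K) ∧
      (∀ Sstar : Finset V,
        (∀ S : Finset V,
            cutC w Sstar Sstarᶜ
              + ∑ j ∈ Sstarᶜ ∩ (Lp ∪ Lm)ᶜ, max (lam * deg w j) 0
              + ∑ j ∈ Sstar ∩ (Lp ∪ Lm)ᶜ, max (-(lam * deg w j)) 0
              + ∑ i ∈ Lp ∩ Sstarᶜ, γ i + ∑ k ∈ Lm ∩ Sstar, γ k
            ≤ cutC w S Sᶜ
              + ∑ j ∈ Sᶜ ∩ (Lp ∪ Lm)ᶜ, max (lam * deg w j) 0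
              + ∑ j ∈ S ∩ (Lp ∪ Lm)ᶜ, max (-(lam * deg w j)) 0
              + ∑ i ∈ Lp ∩ Sᶜ, γ i + ∑ k ∈ Lm ∩ S, γ k) →
        (∀ S : Finset V,
            cutC w Sstar Sstarᶜ - lam * ∑ j ∈ (Lp ∪ Lm)ᶜ ∩ Sstar, deg w j
              + ∑ i ∈ Lp ∩ Sstarᶜ, γ i + ∑ k ∈ Lm ∩ Sstar, γ k
            ≤ cutC w S Sᶜ - lam * ∑ j ∈ (Lp ∪ Lm)ᶜ ∩ S, deg w j
              + ∑ i ∈ Lp ∩ Sᶜ, γ i + ∑ k ∈ Lm ∩ S, γ k)) := by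
  refine ⟨∑ j ∈ (Lp ∪ Lm)ᶜ, max (lam * deg w j) 0, ?_, ?_⟩
  · intro S
    have := key_6 w lam (Lp ∪ Lm)ᶜ S
    linarith
  · intro Sstar hmin S
    have h1 := key_6 w lam (Lp ∪ Lm)ᶜ Sstar
    have h2 := key_6 w lam (Lp ∪ Lm)ᶜ S
    have := hmin S
    linarith
end

section
/- If the penalty weights γ_i for all i ∈ L⁺ ∪ L⁻ strictly exceed an upper bound B on C(S,S̄) − λ·Σ_{i∈S∩U} d_i taken over all S with L⁺ ⊆ S ⊆ V∖L⁻ (where B is finite since the graph is finite), then any optimal solution S* of the penalized problem min_{∅⊂S⊂V} C(S,S̄) − λ·Σ_{i∈S∩U} d_i + Σ_{i∈S̄∩L⁺} γ_i + Σ_{j∈S∩L⁻} γ_j satisfies L⁺ ⊆ S* ⊆ V∖L⁻, provided λ·Σ_{i∈S∩U} d_i admits the bound uniformly, i.e., CHNC with sufficiently large penalties reduces to constrained HNC. -/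
open Finset

variable {V : Type*}

theorem stmt_8 [Fintype V] [DecidableEq V] (w : V → V → ℝ)
    (hsym : ∀ i j, w i j = w j i) (hnn : ∀ i j, 0 ≤ w i j)
    (Lp Lm : Finset V) (hLp : Lp.Nonempty) (hLm : Lm.Nonempty)
    (hdisj : Disjoint Lp Lm) (lam B : ℝ)
    (γ : V → ℝ) (hγnn : ∀ i, 0 ≤ γ i)
    (hB : ∀ S : Finset V,
        |cutC w S Sᶜ - lam * ∑ i ∈ S ∩ (Lp ∪ Lm)ᶜ, deg w i| ≤ B)
    (hγ : ∀ i ∈ Lp ∪ Lm, 2 * B < γ i)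
    (Sstar : Finset V) (hne : Sstar.Nonempty) (hproper : Sstar ≠ Finset.univ)
    (hopt : ∀ S : Finset V, S.Nonempty → S ≠ Finset.univ →
        cutC w Sstar Sstarᶜ - lam * ∑ i ∈ Sstar ∩ (Lp ∪ Lm)ᶜ, deg w i
          + ∑ i ∈ Sstarᶜ ∩ Lp, γ i + ∑ j ∈ Sstar ∩ Lm, γ j
        ≤ cutC w S Sᶜ - lam * ∑ i ∈ S ∩ (Lp ∪ Lm)ᶜ, deg w i
          + ∑ i ∈ Sᶜ ∩ Lp, γ i + ∑ j ∈ S ∩ Lm, γ j) :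
    Lp ⊆ Sstar ∧ Disjoint Sstar Lm := by
  have hLpuniv : Lp ≠ Finset.univ := by
    intro h
    obtain ⟨x, hx⟩ := hLm
    exact (Finset.disjoint_left.mp hdisj (h ▸ Finset.mem_univ x)) hx
  have hkey := hopt Lp hLp hLpuniv
  have e1 : Lpᶜ ∩ Lp = ∅ := by ext x; simp
  have e2 : Lp ∩ Lm = ∅ := Finset.disjoint_iff_inter_eq_empty.mp hdisj
  simp only [e1, e2, Finset.sum_empty, add_zero] at hkey
  have hBLp := (abs_le.mp (hB Lp)).2
  have hBS := (abs_le.mp (hB Sstar)).1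
  set A := ∑ i ∈ Sstarᶜ ∩ Lp, γ i with hA
  set C := ∑ j ∈ Sstar ∩ Lm, γ j with hC
  have hAnn : 0 ≤ A := Finset.sum_nonneg fun i _ => hγnn i
  have hCnn : 0 ≤ C := Finset.sum_nonneg fun i _ => hγnn i
  have hpen : A + C ≤ 2 * B := by linarith
  constructor
  · intro i hi
    by_contra hiS
    have him : i ∈ Sstarᶜ ∩ Lp := Finset.mem_inter.mpr ⟨Finset.mem_compl.mpr hiS, hi⟩
    have hle : γ i ≤ A := Finset.single_le_sum (fun j _ => hγnn j) him
    have := hγ i (Finset.mem_union_left _ hi)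
    linarith
  · rw [Finset.disjoint_left]
    intro i hiS hiL
    have him : i ∈ Sstar ∩ Lm := Finset.mem_inter.mpr ⟨hiS, hiL⟩
    have hle : γ i ≤ C := Finset.single_le_sum (fun j _ => hγnn j) him
    have := hγ i (Finset.mem_union_right _ hiL)
    linarith
end

section
/- Monotonicity underlying the nested cut property: if f_{λ}(S) = C(S,S̄) − λ·Σ_{i∈S} d_i, then for λ₁ < λ₂, and S₁ a minimizer of f_{λ₁} and S₂ a minimizer of f_{λ₂} (over a common lattice family of feasible sets closed under union and intersection), S₁ ∪ S₂ is also a minimizer of f_{λ₂} and S₁ ∩ S₂ is also a minimizer of f_{λ₁}. Consequently there exist minimizers that are nested. -/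
open Finset

variable {V : Type*}

lemma cut_eq_aux13 [Fintype V] [DecidableEq V] (w : V → V → ℝ) (S : Finset V) :
    cutC w S Sᶜ = ∑ i, ∑ j, if i ∈ S ∧ j ∉ S then w i j else 0 := by
  unfold cutC
  have h1 : ∀ i, (∑ j, if i ∈ S ∧ j ∉ S then w i j else 0)
      = if i ∈ S then ∑ j ∈ Sᶜ, w i j else 0 := by
    intro i
    by_cases h : i ∈ S
    · simp only [h, true_and, if_true]
      rw [show (Sᶜ : Finset V) = Finset.univ.filter (· ∉ S) from by ext x; simp,
        Finset.sum_filter]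
    · simp [h]
  simp only [h1]
  rw [Finset.sum_ite_mem, Finset.univ_inter]

lemma submod_aux13 [Fintype V] [DecidableEq V] (w : V → V → ℝ) (hnn : ∀ i j, 0 ≤ w i j)
    (A B : Finset V) :
    cutC w (A ∪ B) (A ∪ B)ᶜ + cutC w (A ∩ B) (A ∩ B)ᶜ
      ≤ cutC w A Aᶜ + cutC w B Bᶜ := by
  rw [cut_eq_aux13, cut_eq_aux13, cut_eq_aux13, cut_eq_aux13,
    ← Finset.sum_add_distrib, ← Finset.sum_add_distrib]
  apply Finset.sum_le_sum; intro i _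
  rw [← Finset.sum_add_distrib, ← Finset.sum_add_distrib]
  apply Finset.sum_le_sum; intro j _
  by_cases hiA : i ∈ A <;> by_cases hiB : i ∈ B <;> by_cases hjA : j ∈ A <;>
    by_cases hjB : j ∈ B <;>
    simp [Finset.mem_union, Finset.mem_inter, hiA, hiB, hjA, hjB] <;>
    linarith [hnn i j]

theorem stmt_13 [Fintype V] [DecidableEq V] (w : V → V → ℝ)
    (hsym : ∀ i j, w i j = w j i) (hnn : ∀ i j, 0 ≤ w i j)
    (F : Finset V → Prop)
    (hFu : ∀ A B, F A → F B → F (A ∪ B))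
    (hFi : ∀ A B, F A → F B → F (A ∩ B))
    (l₁ l₂ : ℝ) (h12 : l₁ < l₂)
    (S₁ S₂ : Finset V) (hS₁ : F S₁) (hS₂ : F S₂)
    (hmin1 : ∀ T, F T →
        cutC w S₁ S₁ᶜ - l₁ * ∑ i ∈ S₁, deg w i
          ≤ cutC w T Tᶜ - l₁ * ∑ i ∈ T, deg w i)
    (hmin2 : ∀ T, F T →
        cutC w S₂ S₂ᶜ - l₂ * ∑ i ∈ S₂, deg w i
          ≤ cutC w T Tᶜ - l₂ * ∑ i ∈ T, deg w i) :
    (∀ T, F T →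
        cutC w (S₁ ∪ S₂) (S₁ ∪ S₂)ᶜ - l₂ * ∑ i ∈ S₁ ∪ S₂, deg w i
          ≤ cutC w T Tᶜ - l₂ * ∑ i ∈ T, deg w i) ∧
    (∀ T, F T →
        cutC w (S₁ ∩ S₂) (S₁ ∩ S₂)ᶜ - l₁ * ∑ i ∈ S₁ ∩ S₂, deg w i
          ≤ cutC w T Tᶜ - l₁ * ∑ i ∈ T, deg w i) := by
  have hdnn : ∀ i, (0:ℝ) ≤ deg w i := fun i => Finset.sum_nonneg fun j _ => hnn i j
  -- modularity of degree sums
  have hmod : (∑ i ∈ S₁ ∪ S₂, deg w i) + ∑ i ∈ S₁ ∩ S₂, deg w i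
      = (∑ i ∈ S₁, deg w i) + ∑ i ∈ S₂, deg w i := Finset.sum_union_inter
  -- monotonicity of degree sums
  have hm1 : (∑ i ∈ S₁ ∩ S₂, deg w i) ≤ ∑ i ∈ S₁, deg w i :=
    Finset.sum_le_sum_of_subset_of_nonneg Finset.inter_subset_left
      (fun i _ _ => hdnn i)
  have hm2 : (∑ i ∈ S₂, deg w i) ≤ ∑ i ∈ S₁ ∪ S₂, deg w i :=
    Finset.sum_le_sum_of_subset_of_nonneg Finset.subset_union_right
      (fun i _ _ => hdnn i)
  have hsub := submod_aux13 w hnn S₁ S₂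
  have h4 := hmin1 (S₁ ∩ S₂) (hFi _ _ hS₁ hS₂)
  have h5 := hmin2 (S₁ ∪ S₂) (hFu _ _ hS₁ hS₂)
  have key1 : cutC w (S₁ ∪ S₂) (S₁ ∪ S₂)ᶜ - l₂ * ∑ i ∈ S₁ ∪ S₂, deg w i
      ≤ cutC w S₂ S₂ᶜ - l₂ * ∑ i ∈ S₂, deg w i := by
    have hl : l₁ * ((∑ i ∈ S₁ ∪ S₂, deg w i) + ∑ i ∈ S₁ ∩ S₂, deg w i)
        = l₁ * ((∑ i ∈ S₁, deg w i) + ∑ i ∈ S₂, deg w i) := by rw [hmod]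
    nlinarith [mul_nonneg (sub_nonneg.2 h12.le) (sub_nonneg.2 hm2)]
  have key2 : cutC w (S₁ ∩ S₂) (S₁ ∩ S₂)ᶜ - l₁ * ∑ i ∈ S₁ ∩ S₂, deg w i
      ≤ cutC w S₁ S₁ᶜ - l₁ * ∑ i ∈ S₁, deg w i := by
    have hl : l₂ * ((∑ i ∈ S₁ ∪ S₂, deg w i) + ∑ i ∈ S₁ ∩ S₂, deg w i)
        = l₂ * ((∑ i ∈ S₁, deg w i) + ∑ i ∈ S₂, deg w i) := by rw [hmod]
    nlinarith [mul_nonneg (sub_nonneg.2 h12.le) (sub_nonneg.2 hm1)]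
  exact ⟨fun T hT => key1.trans (hmin2 T hT), fun T hT => key2.trans (hmin1 T hT)⟩
end

section
/- The capacity of the (s,t)-cut (S,S̄) in the HNC graph G_{st}(λ) with λ ≥ 0 (source arcs (s,i) of capacity λd_i for i∈U, infinite arcs for seeds) equals C(S,S̄) + λ·Σ_{i∈U∩S̄} d_i for any finite cut, which equals C(S,S̄) − λ·Σ_{i∈U∩S} d_i + λ·Σ_{i∈U} d_i; hence minimizing cut capacity is equivalent to minimizing C(S,S̄) − λ·Σ_{i∈S} d_i subject to L⁺ ⊆ S ⊆ V∖L⁻. -/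
open Finset

variable {V : Type*}

lemma sum_compl_inter [Fintype V] [DecidableEq V] (f : V → ℝ) (S T : Finset V) :
    ∑ i ∈ Sᶜ ∩ T, f i = ∑ i ∈ T, f i - ∑ i ∈ S ∩ T, f i := by
  have h : ∑ i ∈ T ∩ S, f i + ∑ i ∈ T \ S, f i = ∑ i ∈ T, f i :=
    Finset.sum_inter_add_sum_sdiff T S f
  simp only [sdiff_eq, Finset.inf_eq_inter, Finset.inter_comm T Sᶜ, Finset.inter_comm T S] at h
  linarith

lemma sum_split [Fintype V] [DecidableEq V] (f : V → ℝ) (S Lp Lm : Finset V)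
    (hp : Lp ⊆ S) (hd : Disjoint S Lm) :
    ∑ i ∈ S, f i = ∑ i ∈ S ∩ (Lp ∪ Lm)ᶜ, f i + ∑ i ∈ Lp, f i := by
  have key : S ∩ (Lp ∪ Lm) = Lp := by
    ext x
    simp only [Finset.mem_inter, Finset.mem_union]
    constructor
    · rintro ⟨hx, hx2 | hx2⟩
      · exact hx2
      · exact absurd hx2 (fun h => (Finset.disjoint_left.mp hd hx h))
    · intro hx; exact ⟨hp hx, Or.inl hx⟩
  have h : ∑ i ∈ S ∩ (Lp ∪ Lm), f i + ∑ i ∈ S \ (Lp ∪ Lm), f i = ∑ i ∈ S, f i :=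
    Finset.sum_inter_add_sum_sdiff S (Lp ∪ Lm) f
  simp only [sdiff_eq, Finset.inf_eq_inter, key] at h
  linarith

theorem stmt_19 [Fintype V] [DecidableEq V] (w : V → V → ℝ)
    (hsym : ∀ i j, w i j = w j i) (hnn : ∀ i j, 0 ≤ w i j)
    (Lp Lm : Finset V) (hdisj : Disjoint Lp Lm)
    (lam : ℝ) (hlam : 0 ≤ lam) :
    (∀ S : Finset V,
        cutC w S Sᶜ + lam * ∑ i ∈ Sᶜ ∩ (Lp ∪ Lm)ᶜ, deg w i
          = cutC w S Sᶜ - lam * ∑ i ∈ S ∩ (Lp ∪ Lm)ᶜ, deg w i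
            + lam * ∑ i ∈ (Lp ∪ Lm)ᶜ, deg w i) ∧
    (∀ Sstar : Finset V, Lp ⊆ Sstar → Disjoint Sstar Lm →
      ((∀ S : Finset V, Lp ⊆ S → Disjoint S Lm →
          cutC w Sstar Sstarᶜ + lam * ∑ i ∈ Sstarᶜ ∩ (Lp ∪ Lm)ᶜ, deg w i
            ≤ cutC w S Sᶜ + lam * ∑ i ∈ Sᶜ ∩ (Lp ∪ Lm)ᶜ, deg w i) ↔
       (∀ S : Finset V, Lp ⊆ S → Disjoint S Lm →
          cutC w Sstar Sstarᶜ - lam * ∑ i ∈ Sstar, deg w i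
            ≤ cutC w S Sᶜ - lam * ∑ i ∈ S, deg w i))) := by
  have key : ∀ S : Finset V, Lp ⊆ S → Disjoint S Lm →
      cutC w S Sᶜ + lam * ∑ i ∈ Sᶜ ∩ (Lp ∪ Lm)ᶜ, deg w i
        = (cutC w S Sᶜ - lam * ∑ i ∈ S, deg w i)
          + lam * (∑ i ∈ (Lp ∪ Lm)ᶜ, deg w i + ∑ i ∈ Lp, deg w i) := by
    intro S hp hd
    rw [sum_compl_inter (deg w) S ((Lp ∪ Lm)ᶜ), sum_split (deg w) S Lp Lm hp hd]
    ring
  constructor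
  · intro S
    rw [sum_compl_inter (deg w) S ((Lp ∪ Lm)ᶜ)]
    ring
  · intro Sstar hps hds
    constructor
    · intro h S hp hd
      have := h S hp hd
      rw [key S hp hd, key Sstar hps hds] at this
      linarith
    · intro h S hp hd
      have := h S hp hd
      rw [key S hp hd, key Sstar hps hds]
      linarith
end
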